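/- The free energy with elevated boundary condition, F(λ,a) = max(0, F(λ) - a log(λ-1)) for λ > 2 and F(λ,a) = 0 for λ ≤ 2, has a discontinuous derivative in λ at λ = λ_c(a): the right derivative at λ_c(a) is strictly positive while the left derivative is zero, i.e., the phase transition is of first order. -/

import Mathlib

noncomputable def freeEn (l : ℝ) : ℝ := Real.log (l / (2 * Real.sqrt (l - 1)))

/-- The free energy with elevated boundary conditions:
`F(λ,a) = (F(λ) - a log(λ-1))₊` for `λ > 2` and `0` for `λ ≤ 2`. -/
noncomputable def freeEnBC (a lam : ℝ) : ℝ :=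
  if 2 < lam then max 0 (freeEn lam - a * Real.log (lam - 1)) else 0

/-- Auxiliary smooth function `h b l = log l - log 2 - b log (l-1)`. -/
noncomputable def auxH (b l : ℝ) : ℝ := Real.log l - Real.log 2 - b * Real.log (l - 1)

lemma auxH_hasDerivAt (b l : ℝ) (hl : 1 < l) :
    HasDerivAt (auxH b) (l⁻¹ - b * (l - 1)⁻¹) l := by
  have h1 : HasDerivAt Real.log l⁻¹ l := Real.hasDerivAt_log (by linarith)
  have h2 : HasDerivAt (fun x : ℝ => Real.log (x - 1)) ((l - 1)⁻¹) l := by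
    have := (Real.hasDerivAt_log (x := l - 1) (by linarith)).comp l
      ((hasDerivAt_id l).sub_const 1)
    simpa [Function.comp_def] using this
  have := (h1.sub_const (Real.log 2)).sub (h2.const_mul b)
  exact this

lemma freeEn_eq (a l : ℝ) (hl : 1 < l) :
    freeEn l - a * Real.log (l - 1) = auxH (a + 1/2) l := by
  have h1 : (0:ℝ) < l - 1 := by linarith
  have hs : (0:ℝ) < Real.sqrt (l - 1) := Real.sqrt_pos.mpr h1
  unfold freeEn auxH
  rw [Real.log_div (by linarith) (by positivity), Real.log_mul (by norm_num) (by positivity),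
    Real.log_sqrt (le_of_lt h1)]
  ring

lemma auxH_deriv_eq (b l : ℝ) (hl : 1 < l) :
    l⁻¹ - b * (l - 1)⁻¹ = ((1 - b) * l - 1) / (l * (l - 1)) := by
  have h0 : l ≠ 0 := by linarith
  have h1 : l - 1 ≠ 0 := by linarith
  rw [eq_div_iff (mul_ne_zero h0 h1)]
  field_simp
  ring

/-- At the critical point `λ_c(a)` the derivative of `λ ↦ F(λ,a)` is discontinuous:
the right derivative is strictly positive while the left derivative is zero
(first-order phase transition). -/
theorem first_order_transition (a lc : ℝ) (ha : a ∈ Set.Ioo (0 : ℝ) (1 / 2))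
    (hlc : 2 < lc) (heq : freeEn lc = a * Real.log (lc - 1)) :
    (∃ c : ℝ, 0 < c ∧ HasDerivWithinAt (freeEnBC a) c (Set.Ici lc) lc) ∧
      HasDerivWithinAt (freeEnBC a) 0 (Set.Iic lc) lc := by
  obtain ⟨ha0, ha2⟩ := ha
  set b : ℝ := a + 1/2 with hb
  have hb1 : b < 1 := by rw [hb]; linarith
  have hb2 : (1:ℝ)/2 < b := by rw [hb]; linarith
  set m : ℝ := (1 - b)⁻¹ with hm
  have h1b : (0:ℝ) < 1 - b := by linarith
  have hm2 : 2 < m := by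
    rw [hm]
    rw [lt_inv_comm₀ (by norm_num) h1b]
    linarith
  have hHlc : auxH b lc = 0 := by
    rw [← freeEn_eq a lc (by linarith)]
    linarith [heq]
  have hH2 : auxH b 2 = 0 := by unfold auxH; norm_num
  -- continuity of auxH on (1, ∞)
  have hcont : ∀ x : ℝ, 1 < x → ContinuousAt (auxH b) x := fun x hx =>
    (auxH_hasDerivAt b x hx).continuousAt
  -- strict anti on Icc 2 m
  have hanti : StrictAntiOn (auxH b) (Set.Icc 2 m) := by
    apply strictAntiOn_of_deriv_neg (convex_Icc _ _)
    · exact fun x hx => (hcont x (by linarith [hx.1])).continuousWithinAt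
    · intro x hx
      rw [interior_Icc] at hx
      have hx1 : (1:ℝ) < x := by linarith [hx.1]
      rw [(auxH_hasDerivAt b x hx1).deriv, auxH_deriv_eq b x hx1]
      apply div_neg_of_neg_of_pos
      · have : (1 - b) * x < (1 - b) * m := by
          exact mul_lt_mul_of_pos_left hx.2 h1b
        rw [hm, mul_inv_cancel₀ (ne_of_gt h1b)] at this
        linarith
      · nlinarith
  -- strict mono on Ici m
  have hmono : StrictMonoOn (auxH b) (Set.Ici m) := by
    apply strictMonoOn_of_deriv_pos (convex_Ici _)
    · exact fun x hx => (hcont x (by linarith [Set.mem_Ici.mp hx])).continuousWithinAt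
    · intro x hx
      rw [interior_Ici] at hx
      have hx1 : (1:ℝ) < x := by linarith [Set.mem_Ioi.mp hx]
      rw [(auxH_hasDerivAt b x hx1).deriv, auxH_deriv_eq b x hx1]
      apply div_pos
      · have : (1 - b) * m < (1 - b) * x := mul_lt_mul_of_pos_left hx h1b
        rw [hm, mul_inv_cancel₀ (ne_of_gt h1b)] at this
        linarith
      · nlinarith
  -- lc > m
  have hlcm : m < lc := by
    by_contra hle
    push_neg at hle
    have := hanti ⟨le_refl 2, by linarith⟩ ⟨le_of_lt hlc, hle⟩ hlc
    rw [hH2, hHlc] at this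
    exact lt_irrefl 0 this
  -- auxH is negative on (2, lc)
  have hneg : ∀ l : ℝ, 2 < l → l < lc → auxH b l < 0 := by
    intro l h2l hllc
    rcases le_or_gt l m with hlm | hml
    · have := hanti ⟨le_refl 2, le_of_lt hm2⟩ ⟨le_of_lt h2l, hlm⟩ h2l
      rw [hH2] at this; exact this
    · have := hmono (Set.mem_Ici.mpr (le_of_lt hml)) (Set.mem_Ici.mpr (le_of_lt hlcm)) hllc
      rw [hHlc] at this; exact this
  -- auxH nonneg on [lc, ∞)
  have hpos : ∀ l : ℝ, lc ≤ l → 0 ≤ auxH b l := by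
    intro l hl
    rcases eq_or_lt_of_le hl with h | h
    · rw [← h, hHlc]
    · have := hmono (Set.mem_Ici.mpr (le_of_lt hlcm)) (Set.mem_Ici.mpr (by linarith)) h
      rw [hHlc] at this; linarith
  -- freeEnBC equals 0 on Iic lc
  have hzero : ∀ l ∈ Set.Iic lc, freeEnBC a l = 0 := by
    intro l hl
    rw [Set.mem_Iic] at hl
    unfold freeEnBC
    split_ifs with h2l
    · rcases eq_or_lt_of_le hl with h | h
      · rw [h, freeEn_eq a lc (by linarith), hHlc]; simp
      · have := hneg l h2l h
        rw [← freeEn_eq a l (by linarith)] at this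
        simp [max_eq_left (le_of_lt this)]
    · rfl
  -- freeEnBC equals auxH b on Ici lc
  have hright : ∀ l ∈ Set.Ici lc, freeEnBC a l = auxH b l := by
    intro l hl
    rw [Set.mem_Ici] at hl
    unfold freeEnBC
    rw [if_pos (by linarith), freeEn_eq a l (by linarith)]
    exact max_eq_right (hpos l hl)
  constructor
  · refine ⟨lc⁻¹ - b * (lc - 1)⁻¹, ?_, ?_⟩
    · rw [auxH_deriv_eq b lc (by linarith)]
      apply div_pos
      · have : (1 - b) * m < (1 - b) * lc := mul_lt_mul_of_pos_left hlcm h1b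
        rw [hm, mul_inv_cancel₀ (ne_of_gt h1b)] at this
        linarith
      · nlinarith
    · exact ((auxH_hasDerivAt b lc (by linarith)).hasDerivWithinAt).congr hright
        (hright lc (Set.self_mem_Ici))
  · exact (hasDerivWithinAt_const lc (Set.Iic lc) 0).congr hzero
      (hzero lc Set.self_mem_Iic)
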